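/- arXiv:1406.4808 — 4 statements merged into one kernel-verified Lean document; each statement's English description precedes it below -/
import Mathlib

section
/- With x as above and f = f₁₂ + f₁₃ + f₂₃ (where f₁₂=[f₁,f₂], f₁₃=[f₁,f₃], f₂₃=[f₂,f₃] in D(2,1;α)), one has [x, f] = -f; moreover setting e = -(1/2)e₁₂ - (1/(2α²))e₁₃ - (1/(2(α+1)²))e₂₃ (with e₁₂=[e₁,e₂] etc.), the triple (e, x, f) satisfies [x,e]=e, [x,f]=-f, [e,f]=x, i.e. it is an sl₂-triple. -/
open Matrix

/-- The Cartan matrix of `D(2,1;α)`. -/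
def cartanD21 (α : ℂ) : Matrix (Fin 3) (Fin 3) ℂ :=
  !![0, 1, α; 1, 0, -1-α; α, -1-α, 0]

/-- The grading element `x = ((α+1)/(2α))h₁ + (α/(2(α+1)))h₂ + (1/(2α(α+1)))h₃`. -/
noncomputable def xElt (α : ℂ) {g : Type*} [AddCommGroup g] [Module ℂ g]
    (H : Fin 3 → g) : g :=
  ((α+1)/(2*α)) • H 0 + (α/(2*(α+1))) • H 1 + (1/(2*α*(α+1))) • H 2

/-!
Every generator `eⱼ` (resp. `fⱼ`) has `x`-weight `1/2` (resp. `-1/2`): the coefficients of `x`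
solve `Σᵢ xᵢ Aᵢⱼ = 1/2` for the Cartan matrix `A`. Since `x` acts as a derivation, the brackets
`e_{ij}` and `f_{kl}` have weights `1` and `-1`. For `[e, f]`, super-Jacobi gives
`[[eᵢ,eⱼ],[f_k,f_l]] = -Aⱼᵢ hᵢ - Aᵢⱼ hⱼ` when `{k,l} = {i,j}` (with `i ≠ j`) and `0` otherwise,
and the chosen coefficients of `e` recombine `h₁+h₂`, `h₁+h₃`, `h₂+h₃` into `x`.
-/

section Contragredient

variable {ι R g : Type*} [DecidableEq ι] [CommRing R] [AddCommGroup g] [Module R g]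
  (brk : g →ₗ[R] g →ₗ[R] g) (A : Matrix ι ι R) {E F H : ι → g}

theorem brk_E_brk_F_F
    (hEF : ∀ i j, brk (E i) (F j) = if i = j then H i else 0)
    (hHF : ∀ i j, brk (H i) (F j) = -(A i j) • F j)
    (hFH : ∀ i j, brk (F i) (H j) = A j i • F i)
    (hJ : ∀ i k c, brk (E i) (brk (F k) c) = brk (brk (E i) (F k)) c - brk (F k) (brk (E i) c))
    (j k l : ι) :
    brk (E j) (brk (F k) (F l))
      = (if j = k then -A j l else 0) • F l - (if j = l then A j k else 0) • F k := by
  rw [hJ, hEF, hEF]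
  split_ifs <;> simp [hHF, hFH]

theorem brk_brk_E_E_brk_F_F
    (hEF : ∀ i j, brk (E i) (F j) = if i = j then H i else 0)
    (hHF : ∀ i j, brk (H i) (F j) = -(A i j) • F j)
    (hFH : ∀ i j, brk (F i) (H j) = A j i • F i)
    (hJ : ∀ i k c, brk (E i) (brk (F k) c) = brk (brk (E i) (F k)) c - brk (F k) (brk (E i) c))
    (hJE : ∀ i j c, brk (E i) (brk (E j) c) = brk (brk (E i) (E j)) c - brk (E j) (brk (E i) c))
    (i j k l : ι) :
    brk (brk (E i) (E j)) (brk (F k) (F l))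
      = (if j = k ∧ i = l then -A j l • H i - A i k • H j else 0)
        + (if j = l ∧ i = k then -A j k • H i - A i l • H j else 0) := by
  have hsplit : brk (brk (E i) (E j)) (brk (F k) (F l))
      = brk (E i) (brk (E j) (brk (F k) (F l))) + brk (E j) (brk (E i) (brk (F k) (F l))) := by
    rw [hJE]; abel
  rw [hsplit, brk_E_brk_F_F brk A hEF hHF hFH hJ, brk_E_brk_F_F brk A hEF hHF hFH hJ]
  simp only [map_sub, map_smul, hEF]
  split_ifs <;> first | (exfalso; tauto) | (subst_vars; module)

end Contragredient

theorem brk_brk_of_eigen {R g : Type*} [CommRing R] [AddCommGroup g] [Module R g]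
    (brk : g →ₗ[R] g →ₗ[R] g) {u a b : g} {c d : R}
    (hu : ∀ a b, brk u (brk a b) = brk (brk u a) b + brk a (brk u b))
    (ha : brk u a = c • a) (hb : brk u b = d • b) :
    brk u (brk a b) = (c + d) • brk a b := by
  rw [hu, ha, hb, map_smul, LinearMap.smul_apply, map_smul, add_smul]

section GradingElement

variable {α : ℂ} {g : Type*} [AddCommGroup g] [Module ℂ g] (brk : g →ₗ[ℂ] g →ₗ[ℂ] g)
  {H : Fin 3 → g}

/-- The eigenvalue of `x` on a common eigenvector on which each `hᵢ` acts by `c i`. -/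
noncomputable def weightAtX (α : ℂ) (c : Fin 3 → ℂ) : ℂ :=
  (α+1)/(2*α) * c 0 + α/(2*(α+1)) * c 1 + 1/(2*α*(α+1)) * c 2

theorem weightAtX_cartanD21 (hα : α ≠ 0) (hα' : α + 1 ≠ 0) (j : Fin 3) :
    weightAtX α (fun i => cartanD21 α i j) = 1/2 := by
  fin_cases j <;> simp [weightAtX, cartanD21] <;> field_simp <;> ring

theorem weightAtX_neg (c : Fin 3 → ℂ) : weightAtX α (-c) = -weightAtX α c := by
  simp only [weightAtX, Pi.neg_apply]
  ring

theorem brk_xElt_of_forall_brk_H {v : g} (c : Fin 3 → ℂ) (hv : ∀ i, brk (H i) v = c i • v) :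
    brk (xElt α H) v = weightAtX α c • v := by
  simp only [xElt, weightAtX, map_add, map_smul, LinearMap.add_apply, LinearMap.smul_apply, hv]
  module

theorem brk_xElt_brk (hJH : ∀ i a b, brk (H i) (brk a b) = brk (brk (H i) a) b + brk a (brk (H i) b))
    (a b : g) :
    brk (xElt α H) (brk a b) = brk (brk (xElt α H) a) b + brk a (brk (xElt α H) b) := by
  simp only [xElt, map_add, map_smul, LinearMap.add_apply, LinearMap.smul_apply, hJH]
  module

end GradingElement

theorem d21_sl2_triple_general (α : ℂ) (hα : α ≠ 0) (hα' : α ≠ -1)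
    (g : Type*) [AddCommGroup g] [Module ℂ g]
    (brk : g →ₗ[ℂ] g →ₗ[ℂ] g)
    (E F H : Fin 3 → g)
    -- contragredient relations
    (hEF : ∀ i j, brk (E i) (F j) = if i = j then H i else 0)
    (hHE : ∀ i j, brk (H i) (E j) = cartanD21 α i j • E j)
    (hHF : ∀ i j, brk (H i) (F j) = -(cartanD21 α i j) • F j)
    (hFH : ∀ i j, brk (F i) (H j) = (cartanD21 α j i) • F i)
    -- super-Jacobi identity for odd generators and any third element
    (hJodd : ∀ u ∈ Set.range E ∪ Set.range F, ∀ v ∈ Set.range E ∪ Set.range F, ∀ c,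
        brk u (brk v c) = brk (brk u v) c - brk v (brk u c))
    -- the even Cartan generators act by derivations
    (hJH : ∀ i (a b : g), brk (H i) (brk a b) = brk (brk (H i) a) b + brk a (brk (H i) b)) :
    ∀ e f : g,
      f = brk (F 0) (F 1) + brk (F 0) (F 2) + brk (F 1) (F 2) →
      e = (-(1/2) : ℂ) • brk (E 0) (E 1) + (-(1/(2*α^2))) • brk (E 0) (E 2)
            + (-(1/(2*(α+1)^2))) • brk (E 1) (E 2) →
      brk (xElt α H) e = e ∧ brk (xElt α H) f = -f ∧ brk e f = xElt α H := by
  rintro e f rfl rfl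
  have hα1 : α + 1 ≠ 0 := fun h => hα' (eq_neg_of_add_eq_zero_left h)
  have hxE (j : Fin 3) : brk (xElt α H) (E j) = (1/2 : ℂ) • E j := by
    rw [brk_xElt_of_forall_brk_H brk _ (hHE · j), weightAtX_cartanD21 hα hα1]
  have hxF (j : Fin 3) : brk (xElt α H) (F j) = (-(1/2) : ℂ) • F j := by
    rw [brk_xElt_of_forall_brk_H brk (-fun i => cartanD21 α i j) (hHF · j), weightAtX_neg,
      weightAtX_cartanD21 hα hα1]
  have hxEE (i j : Fin 3) : brk (xElt α H) (brk (E i) (E j)) = (1 : ℂ) • brk (E i) (E j) := by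
    rw [brk_brk_of_eigen brk (brk_xElt_brk brk hJH) (hxE i) (hxE j)]; norm_num
  have hxFF (i j : Fin 3) : brk (xElt α H) (brk (F i) (F j)) = (-1 : ℂ) • brk (F i) (F j) := by
    rw [brk_brk_of_eigen brk (brk_xElt_brk brk hJH) (hxF i) (hxF j)]; norm_num
  have hEFF := brk_brk_E_E_brk_F_F brk (cartanD21 α) hEF hHF hFH
    (fun i k => hJodd _ (.inl ⟨i, rfl⟩) _ (.inr ⟨k, rfl⟩))
    (fun i j => hJodd _ (.inl ⟨i, rfl⟩) _ (.inl ⟨j, rfl⟩))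
  refine ⟨?_, ?_, ?_⟩
  · simp only [map_add, map_smul, hxEE]
    module
  · simp only [map_add, hxFF]
    module
  · simp only [map_add, map_smul, LinearMap.add_apply, LinearMap.smul_apply, hEFF]
    simp only [cartanD21, xElt, of_apply, cons_val', cons_val_zero, cons_val_one, cons_val,
      cons_val_fin_one, Fin.isValue, Fin.reduceEq, ↓reduceIte, and_self, and_true, and_false,
      smul_zero, add_zero, zero_add]
    match_scalars <;> field_simp <;> ring

/-- in `D(2,1;α)` (presented as the contragredient Lie superalgebra with
Cartan matrix `[[0,1,α],[1,0,-1-α],[α,-1-α,0]]`), the elements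
`x = ((α+1)/(2α))h₁ + (α/(2(α+1)))h₂ + (1/(2α(α+1)))h₃`, `f = f₁₂+f₁₃+f₂₃` and
`e = -(1/2)e₁₂ - (1/(2α²))e₁₃ - (1/(2(α+1)²))e₂₃` satisfy `[x,e]=e`, `[x,f]=-f`,
`[e,f]=x`, i.e. `(e,x,f)` is an `sl₂`-triple. -/
theorem d21_sl2_triple (α : ℂ) (hα : α ≠ 0) (hα' : α ≠ -1)
    (g : Type*) [AddCommGroup g] [Module ℂ g]
    (brk : g →ₗ[ℂ] g →ₗ[ℂ] g)
    (E F H : Fin 3 → g)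
    -- contragredient relations
    (hEF : ∀ i j, brk (E i) (F j) = if i = j then H i else 0)
    (hFE : ∀ i j, brk (F i) (E j) = if i = j then H j else 0)
    (hHE : ∀ i j, brk (H i) (E j) = cartanD21 α i j • E j)
    (hHF : ∀ i j, brk (H i) (F j) = -(cartanD21 α i j) • F j)
    (hEH : ∀ i j, brk (E i) (H j) = -(cartanD21 α j i) • E i)
    (hFH : ∀ i j, brk (F i) (H j) = (cartanD21 α j i) • F i)
    (hHH : ∀ i j, brk (H i) (H j) = 0)
    -- the generators `eᵢ, fᵢ` are odd
    (hEE : ∀ i, brk (E i) (E i) = 0)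
    (hFF : ∀ i, brk (F i) (F i) = 0)
    (hEsym : ∀ i j, brk (E i) (E j) = brk (E j) (E i))
    (hFsym : ∀ i j, brk (F i) (F j) = brk (F j) (F i))
    -- super-Jacobi identity for odd generators and any third element
    (hJodd : ∀ u ∈ Set.range E ∪ Set.range F, ∀ v ∈ Set.range E ∪ Set.range F, ∀ c,
        brk u (brk v c) = brk (brk u v) c - brk v (brk u c))
    -- the even Cartan generators act by derivations
    (hJH : ∀ i (a b : g), brk (H i) (brk a b) = brk (brk (H i) a) b + brk a (brk (H i) b)) :
    ∀ e f : g,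
      f = brk (F 0) (F 1) + brk (F 0) (F 2) + brk (F 1) (F 2) →
      e = (-(1/2) : ℂ) • brk (E 0) (E 1) + (-(1/(2*α^2))) • brk (E 0) (E 2)
            + (-(1/(2*(α+1)^2))) • brk (E 1) (E 2) →
      brk (xElt α H) e = e ∧ brk (xElt α H) f = -f ∧ brk e f = xElt α H :=
  d21_sl2_triple_general α hα hα' g brk E F H hEF hHE hHF hFH hJodd hJH
end

section
/- The adjoint action of x on D(2,1;α) is diagonalizable with eigenvalues in {-3/2, -1, -1/2, 0, 1/2, 1, 3/2}, where the eigenspaces g_j for j = -3/2,-1,-1/2,0,1/2,1,3/2 have dimensions 1,3,3,3,3,3,1 respectively, and g₀ equals the Cartan subalgebra spanned by h₁,h₂,h₃. -/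
/-! The coefficients of `x` are chosen so that every simple root takes the value `1/2` on `x`,
so `ad x` acts by `1/2` on each `Eᵢ`, by `-1/2` on each `Fᵢ` and by `0` on the Cartan
subalgebra. Since the `hᵢ` act as derivations, so does `ad x`, and it acts on a bracket of
eigenvectors by the sum of their eigenvalues. Hence the given basis consists of eigenvectors,
with eigenvalues `-3/2, -1, -1, -1, -1/2, …, 3/2`; an endomorphism with a basis of eigenvectors is
diagonalizable, and each eigenspace is spanned by the basis vectors carrying that eigenvalue. -/

open Matrix

section EigenBasis

open Module Module.End Submodule Finset

variable {ι K V : Type*} [Field K] [AddCommGroup V] [Module K V]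
  {f : Module.End K V} {b : Basis ι K V} {μ : ι → K}

theorem Module.End.eigenspace_eq_span_of_basis (hf : ∀ i, b i ∈ f.eigenspace (μ i)) (a : K) :
    f.eigenspace a = span K (b '' {i | μ i = a}) := by
  refine le_antisymm (fun v hv => ?_) (span_le.2 ?_)
  · have hcoord : ∀ i, (b.coord i).comp f = μ i • b.coord i := fun i => b.ext fun j => by
      by_cases h : i = j <;> simp [mem_eigenspace_iff.1 (hf j), h]
    rw [Basis.mem_span_image]
    intro i hi
    have := LinearMap.congr_fun (hcoord i) v
    rw [LinearMap.comp_apply, mem_eigenspace_iff.1 hv, map_smul, LinearMap.smul_apply] at this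
    exact (mul_right_cancel₀ (Finsupp.mem_support_iff.1 hi) this).symm
  · rintro _ ⟨i, rfl, rfl⟩
    exact hf i

theorem Module.End.iSup_eigenspace_eq_top_of_basis (hf : ∀ i, b i ∈ f.eigenspace (μ i)) :
    ⨆ a, f.eigenspace a = ⊤ :=
  (eq_top_iff_forall_basis_mem b).2 fun i => mem_iSup_of_mem (μ i) (hf i)

theorem Module.End.HasEigenvalue.exists_eq_of_basis (hf : ∀ i, b i ∈ f.eigenspace (μ i)) {a : K}
    (ha : f.HasEigenvalue a) : ∃ i, μ i = a := by
  by_contra! h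
  refine ha ?_
  simp [eigenspace_eq_span_of_basis hf, h]

theorem Module.End.finrank_eigenspace_of_basis [Fintype ι] [DecidableEq K]
    (hf : ∀ i, b i ∈ f.eigenspace (μ i)) (a : K) :
    finrank K (f.eigenspace a) = #{i | μ i = a} := by
  rw [eigenspace_eq_span_of_basis hf, ← coe_filter_univ, Set.image_eq_range]
  exact (finrank_span_eq_card (b.linearIndependent.comp _ Subtype.val_injective)).trans
    (Fintype.card_coe _)

end EigenBasis

theorem Module.End.apply₂_mem_eigenspace_add {R M : Type*} [CommRing R] [AddCommGroup M]
    [Module R M] {D : Module.End R M} {brk : M →ₗ[R] M →ₗ[R] M}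
    (hD : ∀ u v, D (brk u v) = brk (D u) v + brk u (D v)) {u v : M} {p q : R}
    (hu : u ∈ D.eigenspace p) (hv : v ∈ D.eigenspace q) : brk u v ∈ D.eigenspace (p + q) := by
  rw [Module.End.mem_eigenspace_iff] at *
  rw [hD, hu, hv, map_smul, LinearMap.smul_apply, map_smul, add_smul]

section D21

open Module.End

variable {α : ℂ} {g : Type*} [AddCommGroup g] [Module ℂ g] {brk : g →ₗ[ℂ] g →ₗ[ℂ] g}
  {E F H : Fin 3 → g}

theorem cartanD21_grading (hα : α ≠ 0) (hα' : α ≠ -1) (j : Fin 3) :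
    (α+1)/(2*α) * cartanD21 α 0 j + α/(2*(α+1)) * cartanD21 α 1 j
      + 1/(2*α*(α+1)) * cartanD21 α 2 j = 1/2 := by
  have hα1 : α + 1 ≠ 0 := fun h => hα' (eq_neg_of_add_eq_zero_left h)
  fin_cases j <;> simp [cartanD21] <;> field_simp <;> ring

theorem xElt_leibniz
    (hJH : ∀ i (a b : g), brk (H i) (brk a b) = brk (brk (H i) a) b + brk a (brk (H i) b))
    (u v : g) : brk (xElt α H) (brk u v) = brk (brk (xElt α H) u) v + brk u (brk (xElt α H) v) := by
  simp only [xElt, map_add, map_smul, LinearMap.add_apply, LinearMap.smul_apply, hJH]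
  module

theorem H_mem_eigenspace_xElt (hHH : ∀ i j, brk (H i) (H j) = 0) (j : Fin 3) :
    H j ∈ eigenspace (brk (xElt α H)) 0 := by
  simp [xElt, hHH]

theorem E_mem_eigenspace_xElt (hα : α ≠ 0) (hα' : α ≠ -1)
    (hHE : ∀ i j, brk (H i) (E j) = cartanD21 α i j • E j) (j : Fin 3) :
    E j ∈ eigenspace (brk (xElt α H)) (1/2) := by
  rw [mem_eigenspace_iff, ← cartanD21_grading hα hα' j]
  simp only [xElt, map_add, map_smul, LinearMap.add_apply, LinearMap.smul_apply, hHE]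
  module

theorem F_mem_eigenspace_xElt (hα : α ≠ 0) (hα' : α ≠ -1)
    (hHF : ∀ i j, brk (H i) (F j) = -(cartanD21 α i j) • F j) (j : Fin 3) :
    F j ∈ eigenspace (brk (xElt α H)) (-1/2) := by
  rw [mem_eigenspace_iff, neg_div, ← cartanD21_grading hα hα' j]
  simp only [xElt, map_add, map_smul, LinearMap.add_apply, LinearMap.smul_apply, hHF]
  module

-- Twice the eigenvalue of `ad x` on the `i`-th basis vector: integers make counting decidable.
def d21Weight : Fin 17 → ℤ := ![-3, -2, -2, -2, -1, -1, -1, 0, 0, 0, 1, 1, 1, 2, 2, 2, 3]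

theorem basis_mem_eigenspace_xElt (hα : α ≠ 0) (hα' : α ≠ -1)
    (hHE : ∀ i j, brk (H i) (E j) = cartanD21 α i j • E j)
    (hHF : ∀ i j, brk (H i) (F j) = -(cartanD21 α i j) • F j)
    (hHH : ∀ i j, brk (H i) (H j) = 0)
    (hJH : ∀ i (a b : g), brk (H i) (brk a b) = brk (brk (H i) a) b + brk a (brk (H i) b))
    (b : Module.Basis (Fin 17) ℂ g)
    (hb : (⇑b : Fin 17 → g) =
      ![brk (F 0) (brk (F 1) (F 2)),
        brk (F 0) (F 1), brk (F 0) (F 2), brk (F 1) (F 2),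
        F 0, F 1, F 2,
        H 0, H 1, H 2,
        E 0, E 1, E 2,
        brk (E 0) (E 1), brk (E 0) (E 2), brk (E 1) (E 2),
        brk (E 0) (brk (E 1) (E 2))]) (i : Fin 17) :
    b i ∈ eigenspace (brk (xElt α H)) ((d21Weight i : ℂ) / 2) := by
  set X := brk (xElt α H)
  have hbrk {u v : g} {m n : ℤ} (hu : u ∈ eigenspace X ((m : ℂ) / 2))
      (hv : v ∈ eigenspace X ((n : ℂ) / 2)) : brk u v ∈ eigenspace X (((m + n : ℤ) : ℂ) / 2) := by
    rw [Int.cast_add, add_div]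
    exact apply₂_mem_eigenspace_add (xElt_leibniz hJH) hu hv
  have hH (j : Fin 3) : H j ∈ eigenspace X (((0 : ℤ) : ℂ) / 2) := by
    simpa using H_mem_eigenspace_xElt hHH j
  have hE (j : Fin 3) : E j ∈ eigenspace X (((1 : ℤ) : ℂ) / 2) := by
    simpa using E_mem_eigenspace_xElt hα hα' hHE j
  have hF (j : Fin 3) : F j ∈ eigenspace X (((-1 : ℤ) : ℂ) / 2) := by
    simpa using F_mem_eigenspace_xElt hα hα' hHF j
  fin_cases i <;> simp only [hb, d21Weight, Fin.reduceFinMk, Matrix.cons_val]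
  -- The ascriptions fix `m + n` from the arguments before it is unified with the literal weight.
  exacts [(hbrk (hF 0) (hbrk (hF 1) (hF 2)) :), (hbrk (hF 0) (hF 1) :), (hbrk (hF 0) (hF 2) :),
    (hbrk (hF 1) (hF 2) :), hF 0, hF 1, hF 2, hH 0, hH 1, hH 2, hE 0, hE 1, hE 2,
    (hbrk (hE 0) (hE 1) :), (hbrk (hE 0) (hE 2) :), (hbrk (hE 1) (hE 2) :),
    (hbrk (hE 0) (hbrk (hE 1) (hE 2)) :)]

end D21

theorem d21_adx_diagonalizable_general (α : ℂ) (hα : α ≠ 0) (hα' : α ≠ -1)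
    (g : Type*) [AddCommGroup g] [Module ℂ g]
    (brk : g →ₗ[ℂ] g →ₗ[ℂ] g)
    (E F H : Fin 3 → g)
    (hHE : ∀ i j, brk (H i) (E j) = cartanD21 α i j • E j)
    (hHF : ∀ i j, brk (H i) (F j) = -(cartanD21 α i j) • F j)
    (hHH : ∀ i j, brk (H i) (H j) = 0)
    (hJH : ∀ i (a b : g), brk (H i) (brk a b) = brk (brk (H i) a) b + brk a (brk (H i) b))
    (b : Module.Basis (Fin 17) ℂ g)
    (hb : (⇑b : Fin 17 → g) =
      ![brk (F 0) (brk (F 1) (F 2)),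
        brk (F 0) (F 1), brk (F 0) (F 2), brk (F 1) (F 2),
        F 0, F 1, F 2,
        H 0, H 1, H 2,
        E 0, E 1, E 2,
        brk (E 0) (E 1), brk (E 0) (E 2), brk (E 1) (E 2),
        brk (E 0) (brk (E 1) (E 2))]) :
    (⨆ μ : ℂ, Module.End.eigenspace (brk (xElt α H)) μ) = ⊤ ∧
    (∀ μ : ℂ, Module.End.HasEigenvalue (brk (xElt α H) : Module.End ℂ g) μ →
        μ ∈ ({-3/2, -1, -1/2, 0, 1/2, 1, 3/2} : Set ℂ)) ∧
    Module.finrank ℂ (Module.End.eigenspace (brk (xElt α H)) (-3/2)) = 1 ∧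
    Module.finrank ℂ (Module.End.eigenspace (brk (xElt α H)) (-1)) = 3 ∧
    Module.finrank ℂ (Module.End.eigenspace (brk (xElt α H)) (-1/2)) = 3 ∧
    Module.finrank ℂ (Module.End.eigenspace (brk (xElt α H)) 0) = 3 ∧
    Module.finrank ℂ (Module.End.eigenspace (brk (xElt α H)) (1/2)) = 3 ∧
    Module.finrank ℂ (Module.End.eigenspace (brk (xElt α H)) 1) = 3 ∧
    Module.finrank ℂ (Module.End.eigenspace (brk (xElt α H)) (3/2)) = 1 ∧
    Module.End.eigenspace (brk (xElt α H)) 0 = Submodule.span ℂ {H 0, H 1, H 2} := by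
  have hw := basis_mem_eigenspace_xElt hα hα' hHE hHF hHH hJH b hb
  have hweight {n : ℤ} {a : ℂ} (ha : (n : ℂ) = 2 * a) (i : Fin 17) :
      (d21Weight i : ℂ) / 2 = a ↔ d21Weight i = n := by
    rw [div_eq_iff two_ne_zero, mul_comm, ← ha, Int.cast_inj]
  have hdim {n : ℤ} {a : ℂ} (ha : (n : ℂ) = 2 * a) :
      Module.finrank ℂ (Module.End.eigenspace (brk (xElt α H)) a)
        = (Finset.univ.filter (d21Weight · = n)).card := by
    rw [Module.End.finrank_eigenspace_of_basis hw]
    exact congrArg _ (Finset.filter_congr fun i _ => hweight ha i)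
  have hzero : {i | (d21Weight i : ℂ) / 2 = 0} = {7, 8, 9} := by
    ext i
    rw [Set.mem_ofPred_eq, hweight (n := 0) (by norm_num)]
    fin_cases i <;> simp [d21Weight]
  refine ⟨Module.End.iSup_eigenspace_eq_top_of_basis hw, fun μ hμ => ?_,
    (hdim (n := -3) (by norm_num)).trans (by decide),
    (hdim (n := -2) (by norm_num)).trans (by decide),
    (hdim (n := -1) (by norm_num)).trans (by decide),
    (hdim (n := 0) (by norm_num)).trans (by decide),
    (hdim (n := 1) (by norm_num)).trans (by decide),
    (hdim (n := 2) (by norm_num)).trans (by decide),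
    (hdim (n := 3) (by norm_num)).trans (by decide), ?_⟩
  · obtain ⟨i, rfl⟩ := hμ.exists_eq_of_basis hw
    fin_cases i <;> norm_num [d21Weight]
  · rw [Module.End.eigenspace_eq_span_of_basis hw, hzero, Set.image_insert_eq,
      Set.image_insert_eq, Set.image_singleton, hb]
    rfl

/-- the adjoint action of the grading element `x` on the 17-dimensional
Lie superalgebra `D(2,1;α)` is diagonalizable, its eigenvalues lie in
`{-3/2,-1,-1/2,0,1/2,1,3/2}`, the eigenspaces have dimensions `1,3,3,3,3,3,1`
respectively, and the zero eigenspace `g₀` is the Cartan subalgebra spanned by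
`h₁,h₂,h₃`. -/
theorem d21_adx_diagonalizable (α : ℂ) (hα : α ≠ 0) (hα' : α ≠ -1)
    (g : Type*) [AddCommGroup g] [Module ℂ g]
    (brk : g →ₗ[ℂ] g →ₗ[ℂ] g)
    (E F H : Fin 3 → g)
    (hEF : ∀ i j, brk (E i) (F j) = if i = j then H i else 0)
    (hFE : ∀ i j, brk (F i) (E j) = if i = j then H j else 0)
    (hHE : ∀ i j, brk (H i) (E j) = cartanD21 α i j • E j)
    (hHF : ∀ i j, brk (H i) (F j) = -(cartanD21 α i j) • F j)
    (hEH : ∀ i j, brk (E i) (H j) = -(cartanD21 α j i) • E i)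
    (hFH : ∀ i j, brk (F i) (H j) = (cartanD21 α j i) • F i)
    (hHH : ∀ i j, brk (H i) (H j) = 0)
    (hEE : ∀ i, brk (E i) (E i) = 0)
    (hFF : ∀ i, brk (F i) (F i) = 0)
    (hEsym : ∀ i j, brk (E i) (E j) = brk (E j) (E i))
    (hFsym : ∀ i j, brk (F i) (F j) = brk (F j) (F i))
    (hJodd : ∀ u ∈ Set.range E ∪ Set.range F, ∀ v ∈ Set.range E ∪ Set.range F, ∀ c,
        brk u (brk v c) = brk (brk u v) c - brk v (brk u c))
    (hJH : ∀ i (a b : g), brk (H i) (brk a b) = brk (brk (H i) a) b + brk a (brk (H i) b))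
    (b : Module.Basis (Fin 17) ℂ g)
    (hb : (⇑b : Fin 17 → g) =
      ![brk (F 0) (brk (F 1) (F 2)),
        brk (F 0) (F 1), brk (F 0) (F 2), brk (F 1) (F 2),
        F 0, F 1, F 2,
        H 0, H 1, H 2,
        E 0, E 1, E 2,
        brk (E 0) (E 1), brk (E 0) (E 2), brk (E 1) (E 2),
        brk (E 0) (brk (E 1) (E 2))]) :
    (⨆ μ : ℂ, Module.End.eigenspace (brk (xElt α H)) μ) = ⊤ ∧
    (∀ μ : ℂ, Module.End.HasEigenvalue (brk (xElt α H) : Module.End ℂ g) μ →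
        μ ∈ ({-3/2, -1, -1/2, 0, 1/2, 1, 3/2} : Set ℂ)) ∧
    Module.finrank ℂ (Module.End.eigenspace (brk (xElt α H)) (-3/2)) = 1 ∧
    Module.finrank ℂ (Module.End.eigenspace (brk (xElt α H)) (-1)) = 3 ∧
    Module.finrank ℂ (Module.End.eigenspace (brk (xElt α H)) (-1/2)) = 3 ∧
    Module.finrank ℂ (Module.End.eigenspace (brk (xElt α H)) 0) = 3 ∧
    Module.finrank ℂ (Module.End.eigenspace (brk (xElt α H)) (1/2)) = 3 ∧
    Module.finrank ℂ (Module.End.eigenspace (brk (xElt α H)) 1) = 3 ∧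
    Module.finrank ℂ (Module.End.eigenspace (brk (xElt α H)) (3/2)) = 1 ∧
    Module.End.eigenspace (brk (xElt α H)) 0 = Submodule.span ℂ {H 0, H 1, H 2} :=
  d21_adx_diagonalizable_general α hα hα' g brk E F H hHE hHF hHH hJH b hb
end

section
/- Define c(α,k) = 9/2 - 6k(1+α+α²)/(α(1+α)) and ε(α,k) = -4i√(2/3)·k^{3/2}(1+2α)(-2+α+α²) / (3√(-(2k-1)α²(1+α)²(2k+4k²-α(1+α)))). Then the solutions of the system c(α,k) = 21/2, ε(α,k) = 0 (with α ∉ {0,-1} and the expression under the square roots nonzero) are exactly (α,k) ∈ {(1,-2/3), (-2,-2/3), (-1/2,1/3)}. -/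
/-!
Clearing the denominator `α(1+α)`, the condition `c = 21/2` says `k(1+α+α²) = -α(1+α)`;
in particular `k ≠ 0`. Hence `ε = 0` forces `α ∈ {-1/2, 1, -2}`, and for each of these
values the linear equation determines `k`.
-/

section

variable {K : Type*} [Field K] [CharZero K]

theorem central_charge_eq_iff {α k : K} (hαα : α * (1 + α) ≠ 0) :
    9/2 - 6*k*(1+α+α^2)/(α*(1+α)) = 21/2 ↔ k * (1+α+α^2) = -(α*(1+α)) := by
  have hdiff : 9/2 - 6*k*(1+α+α^2)/(α*(1+α)) - 21/2
      = -6 * (k * (1+α+α^2) + α*(1+α)) / (α*(1+α)) := by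
    have hα := left_ne_zero_of_mul hαα
    have hα1 := right_ne_zero_of_mul hαα
    field_simp
    ring
  rw [← sub_eq_zero, hdiff, div_eq_zero_iff, or_iff_left hαα, mul_eq_zero,
    or_iff_right (by norm_num), add_eq_zero_iff_eq_neg]

theorem coupling_numerator_eq_zero_iff {α k : K} :
    k * (1+2*α) * (-2+α+α^2) = 0 ↔ k = 0 ∨ α = -1/2 ∨ α = 1 ∨ α = -2 := by
  have hfactor : k * (1+2*α) * (-2+α+α^2) = 2 * (k * (α - -1/2) * ((α - 1) * (α - -2))) := by
    ring
  simp only [hfactor, mul_eq_zero, two_ne_zero, sub_eq_zero, false_or, or_assoc]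

end

theorem SV_values_of_alpha_k_general (α k : ℂ) (hα : α ≠ 0) (hα' : α ≠ -1) :
    (9/2 - 6*k*(1+α+α^2)/(α*(1+α)) = 21/2 ∧ k * (1+2*α) * (-2+α+α^2) = 0)
      ↔ ((α, k) = (1, -2/3) ∨ (α, k) = (-2, -2/3) ∨ (α, k) = (-1/2, 1/3)) := by
  have hαα : α * (1 + α) ≠ 0 :=
    mul_ne_zero hα fun h ↦ hα' (eq_neg_of_add_eq_zero_right h)
  rw [central_charge_eq_iff hαα, coupling_numerator_eq_zero_iff]
  simp only [Prod.ext_iff]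
  constructor
  · rintro ⟨key, rfl | rfl | rfl | rfl⟩
    · exact absurd (by linear_combination key) hαα
    · right; right; exact ⟨rfl, by linear_combination (4/3 : ℂ) * key⟩
    · left; exact ⟨rfl, by linear_combination key / 3⟩
    · right; left; exact ⟨rfl, by linear_combination key / 3⟩
  · rintro (⟨rfl, rfl⟩ | ⟨rfl, rfl⟩ | ⟨rfl, rfl⟩) <;> norm_num

/-- with `c(α,k) = 9/2 - 6k(1+α+α²)/(α(1+α))` and the coupling constant
`ε(α,k)` having numerator `-4i√(2/3)·k^{3/2}(1+2α)(-2+α+α²)` (which vanishes if and only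
if `k(1+2α)(-2+α+α²) = 0`) and nonvanishing denominator
`3√(-(2k-1)α²(1+α)²(2k+4k²-α(1+α)))`, the solutions of `c = 21/2, ε = 0` are exactly
`(α,k) ∈ {(1,-2/3), (-2,-2/3), (-1/2,1/3)}`. -/
theorem SV_values_of_alpha_k (α k : ℂ) (hα : α ≠ 0) (hα' : α ≠ -1)
    (hden : (2*k - 1) * α^2 * (1+α)^2 * (2*k + 4*k^2 - α*(1+α)) ≠ 0) :
    (9/2 - 6*k*(1+α+α^2)/(α*(1+α)) = 21/2 ∧ k * (1+2*α) * (-2+α+α^2) = 0)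
      ↔ ((α, k) = (1, -2/3) ∨ (α, k) = (-2, -2/3) ∨ (α, k) = (-1/2, 1/3)) :=
  SV_values_of_alpha_k_general α k hα hα'
end

section
/- In the SW(3/2,3/2,2) superconformal algebra at (c,ε) = (21/2, 0), with μ = √(9c(4+ε²)/(2(27-2c))) = √14, the change of basis Φ = iH, K = iM̃, X = -(L+√14·W)/3, M = -(∂G+2√14·U)/6 transforms the λ-brackets [H_λ H] = (c/3)λ² + 2L + (4/3)μW and [G_λ H] = M̃ into the Shatashvili–Vafa relations [Φ_λ Φ] = -(7/2)λ² + 6X and [G_λ Φ] = K. -/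
lemma sqrt_aux : Real.sqrt (9*(21/2)*(4+0^2)/(2*(27-2*(21/2)))) = 3/2 * Real.sqrt 14 := by
  have h : (9*(21/2)*(4+0^2)/(2*(27-2*(21/2))) : ℝ) = (3/2)^2 * 14 := by norm_num
  rw [h, Real.sqrt_mul (by positivity), Real.sqrt_sq (by norm_num)]

/-- in the `SW(3/2,3/2,2)` superconformal algebra at `(c,ε) = (21/2,0)`,
with `μ = √(9c(4+ε²)/(2(27-2c)))`, the change of basis `Φ = iH`, `K = iM̃`,
`X = -(L+√14·W)/3` transforms the λ-brackets `[H_λ H] = (c/3)λ² + εM̃ + 2L + (4/3)μW`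
and `[G_λ H] = M̃` into the Shatashvili–Vafa relations `[Φ_λ Φ] = -(7/2)λ² + 6X` and
`[G_λ Φ] = K`.  The λ-bracket `[a_λ b] = Σₙ (λⁿ/n!) a₍ₙ₎b` is recorded through its
coefficients `np n a b = a₍ₙ₎b`. -/
theorem SW_to_ShatashviliVafa
    (V : Type*) [AddCommGroup V] [Module ℂ V]
    (np : ℕ → V →ₗ[ℂ] V →ₗ[ℂ] V)       -- the n-th product `a₍ₙ₎b`
    (vac G L H Mt W U : V)
    (c ε μ : ℂ)
    (hc : c = 21/2) (hε : ε = 0)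
    (hμ : μ = Complex.ofReal (Real.sqrt (9*(21/2)*(4+0^2)/(2*(27-2*(21/2))))))
    -- [H_λ H] = (c/3)λ² + ε M̃ + 2L + (4/3)μ W
    (hHH0 : np 0 H H = ε • Mt + (2 : ℂ) • L + ((4/3) * μ) • W)
    (hHH1 : np 1 H H = 0)
    (hHH2 : np 2 H H = ((2*c)/3) • vac)
    (hHHn : ∀ n ≥ 3, np n H H = 0)
    -- (H, M̃) is a superconformal multiplet: [G_λ H] = M̃
    (hGH0 : np 0 G H = Mt)
    (hGHn : ∀ n ≥ 1, np n G H = 0) :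
    ∀ Φ K X : V,
      Φ = Complex.I • H →
      K = Complex.I • Mt →
      X = (-(1/3) : ℂ) • (L + ((Real.sqrt 14 : ℝ) : ℂ) • W) →
      -- [Φ_λ Φ] = -(7/2)λ² + 6X
      (np 0 Φ Φ = (6 : ℂ) • X ∧ np 1 Φ Φ = 0 ∧ np 2 Φ Φ = (-7 : ℂ) • vac ∧
        ∀ n ≥ 3, np n Φ Φ = 0) ∧
      -- [G_λ Φ] = K
      (np 0 G Φ = K ∧ ∀ n ≥ 1, np n G Φ = 0) := by
  intro Φ K X hΦ hK hX
  subst hΦ hK hX hc hε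
  have hμ' : μ = (3/2 : ℂ) * ((Real.sqrt 14 : ℝ) : ℂ) := by
    rw [hμ, sqrt_aux]; push_cast; ring
  have key : ∀ n, np n (Complex.I • H) (Complex.I • H) = -np n H H := by
    intro n
    simp [map_smul, smul_smul, Complex.I_mul_I, neg_one_smul]
  refine ⟨⟨?_, ?_, ?_, ?_⟩, ?_, ?_⟩
  · rw [key, hHH0, hμ']; module
  · rw [key, hHH1, neg_zero]
  · rw [key, hHH2, ← neg_smul]; norm_num
  · intro n hn; rw [key, hHHn n hn, neg_zero]
  · simp [map_smul, hGH0]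
  · intro n hn; simp [map_smul, hGHn n hn]
end
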